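/- arXiv:math/0003127 — 2 statements merged into one kernel-verified Lean document; each statement's English description precedes it below -/
import Mathlib

section
/- Lehmer's polynomial L(x) = x^{10} + x^9 − x^7 − x^6 − x^5 − x^4 − x^3 + x + 1 has exactly one root of absolute value greater than 1, and its Mahler measure M(L) equals that root's absolute value, which lies strictly between 1.17 and 1.18. -/
open Polynomial

/-- Lehmer's polynomial (as a polynomial over `ℂ`). -/
noncomputable def lehmer : Polynomial ℂ :=
  X ^ 10 + X ^ 9 - X ^ 7 - X ^ 6 - X ^ 5 - X ^ 4 - X ^ 3 + X + 1

/-!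
Lehmer's polynomial `L` is palindromic: `L(x) = x⁵ T(x + x⁻¹)` with
`T = X⁵ + X⁴ - 5X³ - 5X² + 4X + 3`. Sign changes give four real roots of `T` in `(-2, 2)` and a
real root `σ ∈ (1.17, 1.18)` of `L`, whose trace `σ + σ⁻¹ > 2` is the fifth root of `T`. Hence
`L = ∏ᵢ (X² - yᵢ X + 1)` over the roots `yᵢ` of `T`. A factor with `|yᵢ| < 2` has both roots on
the unit circle, and the last factor is `(X - σ)(X - σ⁻¹)`; so `σ` is the only root outside the
closed unit disc, it is simple, and the Mahler measure is `σ`.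
-/

open Set

noncomputable def lehmerPoly (R : Type*) [CommRing R] : R[X] :=
  X ^ 10 + X ^ 9 - X ^ 7 - X ^ 6 - X ^ 5 - X ^ 4 - X ^ 3 + X + 1

noncomputable def lehmerTrace (R : Type*) [CommRing R] : R[X] :=
  X ^ 5 + X ^ 4 - 5 * X ^ 3 - 5 * X ^ 2 + 4 * X + 3

theorem lehmer_eq_lehmerPoly : lehmer = lehmerPoly ℂ := rfl

section
variable (R : Type*) [CommRing R]

theorem lehmerPoly_monic [Nontrivial R] : (lehmerPoly R).Monic := by
  unfold lehmerPoly; monicity!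

theorem lehmerTrace_monic [Nontrivial R] : (lehmerTrace R).Monic := by
  unfold lehmerTrace; monicity!

theorem natDegree_lehmerTrace [Nontrivial R] : (lehmerTrace R).natDegree = 5 := by
  unfold lehmerTrace; compute_degree!

theorem lehmerTrace_map {S : Type*} [CommRing S] (f : R →+* S) :
    (lehmerTrace R).map f = lehmerTrace S := by
  simp [lehmerTrace]

end

theorem lehmerPoly_eval_eq {K : Type*} [Field K] {x : K} (hx : x ≠ 0) :
    (lehmerPoly K).eval x = x ^ 5 * (lehmerTrace K).eval (x + x⁻¹) := by
  simp only [lehmerPoly, lehmerTrace, eval_add, eval_sub, eval_mul, eval_pow, eval_X, eval_one,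
    eval_ofNat]
  field_simp
  ring

theorem Polynomial.Monic.eq_prod_X_sub_C_of_nodup {R : Type*} [CommRing R] [IsDomain R]
    {p : R[X]} (hp : p.Monic) {s : Multiset R} (hs : s.Nodup) (hroot : ∀ a ∈ s, p.IsRoot a)
    (hcard : p.natDegree ≤ s.card) : p = (s.map fun a => X - C a).prod := by
  have hle : s ≤ p.roots :=
    (Multiset.le_iff_subset hs).2 fun a ha => (mem_roots hp.ne_zero).2 (hroot a ha)
  have hroots : s = p.roots := Multiset.eq_of_le_of_card_le hle ((card_roots' p).trans hcard)
  rw [hroots, prod_multiset_X_sub_C_of_monic_of_roots_card_eq hp]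
  exact le_antisymm (card_roots' p) (hroots ▸ hcard)

theorem lehmerPoly_eq_prod_of_lehmerTrace_eq_prod {K : Type*} [Field K] [Infinite K]
    {s : Multiset K} (hs : lehmerTrace K = (s.map fun y => X - C y).prod) :
    lehmerPoly K = (s.map fun y => X ^ 2 - C y * X + 1).prod := by
  have hcard : s.card = 5 := by
    rw [← natDegree_multiset_prod_X_sub_C_eq_card, ← hs, natDegree_lehmerTrace]
  refine eq_of_infinite_eval_eq _ _ ((Set.finite_singleton 0).infinite_compl.mono ?_)
  intro x (hx : x ≠ 0)
  have hquad : ∀ y : K, x ^ 2 - y * x + 1 = x * (x + x⁻¹ - y) := fun y => by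
    field_simp; ring
  calc (lehmerPoly K).eval x = x ^ 5 * (lehmerTrace K).eval (x + x⁻¹) := lehmerPoly_eval_eq hx
    _ = (s.map fun y => x * (x + x⁻¹ - y)).prod := by
      rw [Multiset.prod_map_mul, Multiset.map_const', Multiset.prod_replicate, hcard, hs,
        eval_multiset_prod, Multiset.map_map]
      simp only [Function.comp_def, eval_sub, eval_X, eval_C]
    _ = _ := by simp only [eval_multiset_prod, Multiset.map_map, Function.comp_def, eval_add,
      eval_sub, eval_mul, eval_pow, eval_X, eval_C, eval_one, hquad]

theorem X_sq_sub_C_add_inv_mul_X_add_one {K : Type*} [Field K] {a : K} (ha : a ≠ 0) :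
    (X ^ 2 - C (a + a⁻¹) * X + 1 : K[X]) = (X - C a) * (X - C a⁻¹) := by
  have h : C a * C a⁻¹ = 1 := by rw [← C_mul, mul_inv_cancel₀ ha, C_1]
  rw [C_add]
  linear_combination -h

theorem Complex.norm_eq_one_of_sq_sub_mul_add_one_eq_zero {y : ℝ} (hy : |y| < 2) {z : ℂ}
    (hz : z ^ 2 - y * z + 1 = 0) : ‖z‖ = 1 := by
  have hre := congrArg Complex.re hz
  have him := congrArg Complex.im hz
  simp only [pow_two, Complex.add_re, Complex.sub_re, Complex.mul_re, Complex.ofReal_re,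
    Complex.ofReal_im, Complex.one_re, Complex.zero_re, Complex.add_im, Complex.sub_im,
    Complex.mul_im, Complex.one_im, Complex.zero_im] at hre him
  have hy2 : y ^ 2 < 4 := by nlinarith [abs_lt.1 hy]
  rcases mul_eq_zero.1 (show z.im * (2 * z.re - y) = 0 by linarith) with him0 | hre0
  · rw [him0] at hre
    nlinarith [sq_nonneg (2 * z.re - y)]
  · rw [Complex.norm_def, Real.sqrt_eq_one, Complex.normSq_apply]
    linear_combination -hre + z.re * hre0

theorem exists_zero_Ioo_of_mul_neg {f : ℝ → ℝ} (hf : Continuous f) {a b : ℝ} (hab : a ≤ b)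
    (h : f a * f b < 0) : ∃ c ∈ Ioo a b, f c = 0 := by
  rcases mul_neg_iff.1 h with ⟨ha, hb⟩ | ⟨ha, hb⟩
  · exact intermediate_value_Ioo' hab hf.continuousOn ⟨hb, ha⟩
  · exact intermediate_value_Ioo hab hf.continuousOn ⟨ha, hb⟩

theorem norm_eq_one_of_mem_roots_prod {t : Multiset ℝ} (ht : ∀ y ∈ t, |y| < 2) {z : ℂ}
    (hz : z ∈ ((t.map ((↑) : ℝ → ℂ)).map fun y : ℂ => X ^ 2 - C y * X + 1).prod.roots) :
    ‖z‖ = 1 := by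
  have hz := isRoot_of_mem_roots hz
  rw [IsRoot, eval_multiset_prod, Multiset.prod_eq_zero_iff, Multiset.map_map,
    Multiset.map_map] at hz
  obtain ⟨y, hy, hzy⟩ := Multiset.mem_map.1 hz
  refine Complex.norm_eq_one_of_sq_sub_mul_add_one_eq_zero (ht y hy) ?_
  simpa using hzy

theorem exists_lehmerPoly_root : ∃ σ ∈ Ioo (1.17 : ℝ) 1.18, (lehmerPoly ℝ).IsRoot σ :=
  exists_zero_Ioo_of_mul_neg (lehmerPoly ℝ).continuous (by norm_num)
    (by simp only [lehmerPoly, eval_add, eval_sub, eval_pow, eval_X, eval_one]; norm_num)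

theorem exists_lehmerTrace_roots : ∃ t : Multiset ℝ, t.Nodup ∧ t.card = 4 ∧
    ∀ y ∈ t, |y| < 2 ∧ (lehmerTrace ℝ).IsRoot y := by
  have hT : Continuous fun x => (lehmerTrace ℝ).eval x := (lehmerTrace ℝ).continuous
  have heval (x : ℝ) :
      (lehmerTrace ℝ).eval x = x ^ 5 + x ^ 4 - 5 * x ^ 3 - 5 * x ^ 2 + 4 * x + 3 := by
    simp [lehmerTrace]
  obtain ⟨y₁, ⟨h₁, h₁'⟩, hy₁⟩ := exists_zero_Ioo_of_mul_neg hT (by norm_num : (-2 : ℝ) ≤ -1.8)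
    (by simp only [heval]; norm_num)
  obtain ⟨y₂, ⟨h₂, h₂'⟩, hy₂⟩ := exists_zero_Ioo_of_mul_neg hT (by norm_num : (-1.5 : ℝ) ≤ -1.2)
    (by simp only [heval]; norm_num)
  obtain ⟨y₃, ⟨h₃, h₃'⟩, hy₃⟩ := exists_zero_Ioo_of_mul_neg hT (by norm_num : (-0.7 : ℝ) ≤ -0.5)
    (by simp only [heval]; norm_num)
  obtain ⟨y₄, ⟨h₄, h₄'⟩, hy₄⟩ := exists_zero_Ioo_of_mul_neg hT (by norm_num : (0.8 : ℝ) ≤ 1)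
    (by simp only [heval]; norm_num)
  refine ⟨{y₁, y₂, y₃, y₄}, ?_, rfl, ?_⟩
  · simp only [Multiset.insert_eq_cons, Multiset.nodup_cons, Multiset.mem_cons,
      Multiset.mem_singleton, Multiset.nodup_singleton]
    refine ⟨?_, ?_, ?_, trivial⟩ <;> intro h <;> rcases h with h | h | h <;> linarith
  · simp only [Multiset.insert_eq_cons, Multiset.mem_cons, Multiset.mem_singleton]
    rintro y (rfl | rfl | rfl | rfl) <;> exact ⟨abs_lt.2 ⟨by linarith, by linarith⟩, ‹_›⟩

theorem exists_lehmer_roots_eq : ∃ σ ∈ Ioo (1.17 : ℝ) 1.18, ∃ U : Multiset ℂ,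
    (∀ z ∈ U, ‖z‖ = 1) ∧ lehmer.roots = (σ : ℂ) ::ₘ (σ : ℂ)⁻¹ ::ₘ U := by
  obtain ⟨σ, hσ, hσroot⟩ := exists_lehmerPoly_root
  obtain ⟨t, ht_nodup, ht_card, ht⟩ := exists_lehmerTrace_roots
  have hσ1 : 1 < σ := lt_trans (by norm_num) hσ.1
  have hσ0 : 0 < σ := zero_lt_one.trans hσ1
  have hy : 2 < σ + σ⁻¹ := by
    have h : σ + σ⁻¹ - 2 = (σ - 1) ^ 2 / σ := by field_simp; ring
    have : 0 < (σ - 1) ^ 2 / σ := div_pos (pow_pos (sub_pos.2 hσ1) 2) hσ0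
    linarith
  set y := σ + σ⁻¹
  have hy_root : (lehmerTrace ℝ).IsRoot y := by
    have := lehmerPoly_eval_eq hσ0.ne'
    rw [hσroot.eq_zero, eq_comm, mul_eq_zero] at this
    exact this.resolve_left (pow_ne_zero _ hσ0.ne')
  have hT : lehmerTrace ℂ = (((y ::ₘ t).map ((↑) : ℝ → ℂ)).map fun a : ℂ => X - C a).prod := by
    refine (lehmerTrace_monic ℂ).eq_prod_X_sub_C_of_nodup ?_ ?_ ?_
    · refine (Multiset.nodup_cons.2 ⟨fun hyt => ?_, ht_nodup⟩).map Complex.ofReal_injective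
      linarith [abs_lt.1 (ht y hyt).1]
    · simp only [Multiset.mem_map, Multiset.mem_cons]
      rintro _ ⟨x, hx, rfl⟩
      rw [← lehmerTrace_map ℝ Complex.ofRealHom]
      exact IsRoot.map (hx.elim (· ▸ hy_root) fun hx => (ht x hx).2)
    · simp [natDegree_lehmerTrace, ht_card]
  have hL := lehmerPoly_eq_prod_of_lehmerTrace_eq_prod hT
  rw [Multiset.map_cons, Multiset.map_cons, Multiset.prod_cons, Complex.ofReal_add,
    Complex.ofReal_inv, X_sq_sub_C_add_inv_mul_X_add_one (by exact_mod_cast hσ0.ne')] at hL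
  refine ⟨σ, hσ, _, fun z hz => norm_eq_one_of_mem_roots_prod (fun y hy => (ht y hy).1) hz, ?_⟩
  have hL0 := hL ▸ (lehmerPoly_monic ℂ).ne_zero
  rw [lehmer_eq_lehmerPoly, hL, roots_mul hL0, roots_mul (left_ne_zero_of_mul hL0),
    roots_X_sub_C, roots_X_sub_C, add_assoc, Multiset.singleton_add, Multiset.singleton_add]

/-- Lehmer's polynomial has exactly one root of absolute value greater than `1`;
its Mahler measure `∏ max(|r_j|,1)` equals that root's absolute value, which lies
strictly between `1.17` and `1.18`. -/
theorem lehmer_mahler :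
    ∃ r ∈ lehmer.roots, 1 < ‖r‖ ∧
      (∀ s ∈ lehmer.roots, 1 < ‖s‖ → s = r) ∧
      (lehmer.roots.map fun z => max (‖z‖) 1).prod = ‖r‖ ∧
      1.17 < ‖r‖ ∧ ‖r‖ < 1.18 := by
  obtain ⟨σ, ⟨hσl, hσu⟩, U, hU, hroots⟩ := exists_lehmer_roots_eq
  have hσ1 : 1 < σ := lt_trans (by norm_num) hσl
  have hnorm : ‖(σ : ℂ)‖ = σ := by simp [abs_of_pos (zero_lt_one.trans hσ1)]
  have hnorm_inv : ‖(σ : ℂ)⁻¹‖ < 1 := by rw [norm_inv, hnorm]; exact inv_lt_one_of_one_lt₀ hσ1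
  refine ⟨σ, by simp [hroots], hnorm.symm ▸ hσ1, ?_, ?_, hnorm.symm ▸ hσl, hnorm.symm ▸ hσu⟩
  · intro s hs hs1
    rw [hroots, Multiset.mem_cons, Multiset.mem_cons] at hs
    rcases hs with rfl | rfl | hs
    · rfl
    · exact absurd hs1 hnorm_inv.not_gt
    · exact absurd (hU s hs) hs1.ne'
  · have hU1 : (U.map fun z => max ‖z‖ 1).prod = 1 :=
      Multiset.prod_eq_one fun x hx => by
        obtain ⟨z, hz, rfl⟩ := Multiset.mem_map.1 hx
        simp [hU z hz]
    rw [hroots, Multiset.map_cons, Multiset.map_cons, Multiset.prod_cons, Multiset.prod_cons, hU1,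
      hnorm, max_eq_left hσ1.le, max_eq_right hnorm_inv.le, mul_one, mul_one]
end

section
/- If f is a monic integer polynomial of degree n ≥ 1 with Mahler measure M(f) = 1, then every root of f is either zero or a root of unity. -/
open Polynomial

theorem Polynomial.Monic.mahlerMeasure_eq_prod_roots {p : ℂ[X]} (hp : p.Monic) :
    p.mahlerMeasure = (p.roots.map fun r => max ‖r‖ 1).prod := by
  simp only [mahlerMeasure_eq_leadingCoeff_mul_prod_roots, hp.leadingCoeff, norm_one, one_mul,
    max_comm]

theorem kronecker_of_mahler_eq_one_general (f : Polynomial ℤ) (hm : f.Monic)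
    (h1 : ((f.map (Int.castRingHom ℂ)).roots.map fun r => max ‖r‖ 1).prod = 1) :
    ∀ r ∈ (f.map (Int.castRingHom ℂ)).roots, r = 0 ∨ ∃ n : ℕ, 0 < n ∧ r ^ n = 1 := by
  intro r hr
  have hM : (f.map (Int.castRingHom ℂ)).mahlerMeasure = 1 :=
    (hm.map _).mahlerMeasure_eq_prod_roots.trans h1
  exact or_iff_not_imp_left.mpr fun hr0 => pow_eq_one_of_mahlerMeasure_eq_one hM hr0 hr

/-- Kronecker's theorem: a monic integer polynomial of degree `≥ 1` with Mahler
measure `∏ max(|r_j|,1)` equal to `1` has every root zero or a root of unity. -/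
theorem kronecker_of_mahler_eq_one (f : Polynomial ℤ) (hm : f.Monic)
    (hdeg : 1 ≤ f.natDegree)
    (h1 : ((f.map (Int.castRingHom ℂ)).roots.map fun r => max ‖r‖ 1).prod = 1) :
    ∀ r ∈ (f.map (Int.castRingHom ℂ)).roots, r = 0 ∨ ∃ n : ℕ, 0 < n ∧ r ^ n = 1 :=
  kronecker_of_mahler_eq_one_general f hm h1
end
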